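/- arXiv:1907.03025 — 2 statements merged into one kernel-verified Lean document; each statement's English description precedes it below -/
import Mathlib

section
/- Let ε ∈ ℝⁿ be a vector of independent, mean-zero errors, each subgaussian with constant σ, let 0 < a < 1, and let H be an n×n orthogonal projection matrix with trace(H) = m. Then E exp( (a/(2σ²)) εᵀHε ) ≤ exp( −(m/2) log(1−a) ). -/
open MeasureTheory Real Matrix Finset Filter ProbabilityTheory

noncomputable section

/-- The `ℓ∞` norm of a finite vector. -/
def linf {ι : Type*} [Fintype ι] (v : ι → ℝ) : ℝ := ⨆ j, |v j|

/-- The `ℓq` norm of a finite vector. -/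
def lqnorm {ι : Type*} [Fintype ι] (q : ℝ) (v : ι → ℝ) : ℝ :=
  (∑ j, |v j| ^ q) ^ (1 / q)

/-- The `ℓ1` norm of a finite vector. -/
def l1 {ι : Type*} [Fintype ι] (v : ι → ℝ) : ℝ := ∑ j, |v j|

/-- The `ℓ1` norm of a vector restricted to coordinates in a finite set. -/
def l1on {ι : Type*} (J : Finset ι) (v : ι → ℝ) : ℝ := ∑ j ∈ J, |v j|

/-- The squared euclidean norm of a finite vector. -/
def sq2 {ι : Type*} [Fintype ι] (v : ι → ℝ) : ℝ := ∑ i, v i ^ 2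

/-- The support of a vector, as a finite set of coordinates. -/
def suppF {p : ℕ} (v : Fin p → ℝ) : Finset (Fin p) :=
  Finset.univ.filter fun j => v j ≠ 0

/-- The minimal absolute value of a vector over its support (`β°_min`). -/
def bmin {p : ℕ} (v : Fin p → ℝ) : ℝ :=
  sInf ((fun j => |v j|) '' (suppF v : Set (Fin p)))

/-- The submatrix of `X` consisting of the columns indexed by `J`. -/
def colsub {n p : ℕ} (X : Matrix (Fin n) (Fin p) ℝ) (J : Finset (Fin p)) :
    Matrix (Fin n) J ℝ := Matrix.of fun i j => X i j.1

/-- The orthogonal projection `H_J = X_J (X_Jᵀ X_J)⁻¹ X_Jᵀ`. -/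
def proj {n p : ℕ} (X : Matrix (Fin n) (Fin p) ℝ) (J : Finset (Fin p)) :
    Matrix (Fin n) (Fin n) ℝ :=
  colsub X J * ((colsub X J)ᵀ * colsub X J)⁻¹ * (colsub X J)ᵀ

/-- The quadratic form `vᵀ H v`. -/
def quadf {n : ℕ} (H : Matrix (Fin n) (Fin n) ℝ) (v : Fin n → ℝ) : ℝ :=
  v ⬝ᵥ (H *ᵥ v)

/-- `δ_k = min_{J ⊂ T, |T∖J| = k} ‖(I − H_J) X_T β°_T‖²` (note `X_T β°_T = X β°`). -/
def deltaK {n p : ℕ} (X : Matrix (Fin n) (Fin p) ℝ) (β0 : Fin p → ℝ) (k : ℕ) : ℝ :=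
  sInf {d | ∃ J ⊆ suppF β0, (suppF β0 \ J).card = k ∧
        d = sq2 ((1 - proj X J) *ᵥ (X *ᵥ β0))}

/-- The scaled Kullback–Leibler distance `δ = min_{1 ≤ k ≤ t−1} δ_k / k`. -/
def deltaKL {n p : ℕ} (X : Matrix (Fin n) (Fin p) ℝ) (β0 : Fin p → ℝ) : ℝ :=
  sInf {d | ∃ k, 1 ≤ k ∧ k ≤ (suppF β0).card - 1 ∧ d = deltaK X β0 k / k}

/-- The set `𝔹`: union over sparse supersets `J ⊇ T` of the balls
`{β_J : ‖X_J(β°_J − β_J)‖² ≤ δ_{t−1}}`. -/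
def bigBall {n p : ℕ} (X : Matrix (Fin n) (Fin p) ℝ) (β0 : Fin p → ℝ) (tbar : ℕ) :
    Set (Fin p → ℝ) :=
  {β | ∃ J : Finset (Fin p), suppF β0 ⊆ J ∧ (colsub X J).rank = J.card ∧
        J.card ≤ tbar ∧ (∀ j ∉ J, β j = 0) ∧
        sq2 (X *ᵥ (β0 - β)) ≤ deltaK X β0 ((suppF β0).card - 1)}

/-- The GLM loss `ℓ(β) = Σ_i [γ(x_iᵀβ) − y_i x_iᵀβ]`. -/
def glmLoss {n p : ℕ} (X : Matrix (Fin n) (Fin p) ℝ) (γ : ℝ → ℝ) (yv : Fin n → ℝ)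
    (β : Fin p → ℝ) : ℝ := ∑ i, (γ ((X *ᵥ β) i) - yv i * (X *ᵥ β) i)

/-- The total cumulant `g(β) = Σ_i γ(x_iᵀβ)`. -/
def totalCum {n p : ℕ} (X : Matrix (Fin n) (Fin p) ℝ) (γ : ℝ → ℝ) (β : Fin p → ℝ) : ℝ :=
  ∑ i, γ ((X *ᵥ β) i)

/-- `γ⃗'(Xβ)`, the coordinatewise derivative of the cumulant at `Xβ`. -/
def gdot {n p : ℕ} (X : Matrix (Fin n) (Fin p) ℝ) (γ : ℝ → ℝ) (β : Fin p → ℝ) :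
    Fin n → ℝ := fun i => deriv γ ((X *ᵥ β) i)

/-- The signed pseudo-cone `C_a`. -/
def cone {n p : ℕ} (X : Matrix (Fin n) (Fin p) ℝ) (γ : ℝ → ℝ) (β0 : Fin p → ℝ)
    (a : ℝ) : Set (Fin p → ℝ) :=
  {ν | l1on (suppF β0)ᶜ ν ≤ (1 + a) / (1 - a) * l1on (suppF β0) ν ∧
       ∀ j ∉ suppF β0, ν j * (Xᵀ *ᵥ (gdot X γ (β0 + ν) - gdot X γ β0)) j ≤ 0}

/-- The sign-restricted pseudo-cone invertibility factor `ζ_{a,q}`. -/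
def zetaq {n p : ℕ} (X : Matrix (Fin n) (Fin p) ℝ) (γ : ℝ → ℝ) (β0 : Fin p → ℝ)
    (a q : ℝ) : ℝ :=
  sInf {z | ∃ ν ∈ cone X γ β0 a, ν ≠ 0 ∧
        z = linf (Xᵀ *ᵥ (gdot X γ (β0 + ν) - gdot X γ β0)) / lqnorm q ν}

/-- The sign-restricted pseudo-cone invertibility factor `ζ_a = ζ_{a,∞}`. -/
def zetaInf {n p : ℕ} (X : Matrix (Fin n) (Fin p) ℝ) (γ : ℝ → ℝ) (β0 : Fin p → ℝ)
    (a : ℝ) : ℝ :=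
  sInf {z | ∃ ν ∈ cone X γ β0 a, ν ≠ 0 ∧
        z = linf (Xᵀ *ᵥ (gdot X γ (β0 + ν) - gdot X γ β0)) / linf ν}

/-- `ℓ_J`: the minimal GLM loss over vectors supported on `J`. -/
def lossJ {n p : ℕ} (X : Matrix (Fin n) (Fin p) ℝ) (γ : ℝ → ℝ) (yv : Fin n → ℝ)
    (J : Finset (Fin p)) : ℝ :=
  sInf (glmLoss X γ yv '' {β | ∀ j ∉ J, β j = 0})

/-- The nested family `𝒥` of the Screening–Selection procedure: the prefixes of an
ordering of the nonzero Lasso coefficients by decreasing absolute values. -/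
def fam {p : ℕ} (b : Fin p → ℝ) : Set (Finset (Fin p)) :=
  {J | J.Nonempty ∧ J ⊆ suppF b ∧ ∀ j ∈ J, ∀ k ∈ suppF b \ J, |b k| ≤ |b j|}

/-- The quadratic (linear-model) loss `ℓ(β) = ‖y − Xβ‖²/2`. -/
def quadLoss {n p : ℕ} (X : Matrix (Fin n) (Fin p) ℝ) (yv : Fin n → ℝ)
    (β : Fin p → ℝ) : ℝ := sq2 (yv - X *ᵥ β) / 2

/-- `ℓ_J` for the quadratic loss. -/
def lossJQ {n p : ℕ} (X : Matrix (Fin n) (Fin p) ℝ) (yv : Fin n → ℝ)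
    (J : Finset (Fin p)) : ℝ :=
  sInf (quadLoss X yv '' {β | ∀ j ∉ J, β j = 0})

/-- `ζ_a` specialized to the linear model. -/
def zetaLin {n p : ℕ} (X : Matrix (Fin n) (Fin p) ℝ) (β0 : Fin p → ℝ) (a : ℝ) : ℝ :=
  sInf {z | ∃ ν : Fin p → ℝ, ν ≠ 0 ∧
        l1on (suppF β0)ᶜ ν ≤ (1 + a) / (1 - a) * l1on (suppF β0) ν ∧
        (∀ j ∉ suppF β0, ν j * (Xᵀ *ᵥ (X *ᵥ ν)) j ≤ 0) ∧
        z = linf (Xᵀ *ᵥ (X *ᵥ ν)) / linf ν}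

/-- The general convex-contrast loss `ℓ(β) = Σ_i φ(βᵀx_i, y_i)`. -/
def conLoss {n p : ℕ} (X : Matrix (Fin n) (Fin p) ℝ) (φ : ℝ → ℝ → ℝ) (yv : Fin n → ℝ)
    (β : Fin p → ℝ) : ℝ := ∑ i, φ ((X *ᵥ β) i) (yv i)

/-- The expected convex-contrast loss `E ℓ(β)`. -/
def eLoss {n p : ℕ} {Ω : Type*} [MeasurableSpace Ω] (μ : Measure Ω)
    (X : Matrix (Fin n) (Fin p) ℝ) (φ : ℝ → ℝ → ℝ) (y : Ω → Fin n → ℝ)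
    (β : Fin p → ℝ) : ℝ := ∫ ω, conLoss X φ (y ω) β ∂μ

/-- The empirical process `Z(r)` over the `ℓ1`-ball `B₁(r)`. -/
def Zproc {n p : ℕ} {Ω : Type*} [MeasurableSpace Ω] (μ : Measure Ω)
    (X : Matrix (Fin n) (Fin p) ℝ) (φ : ℝ → ℝ → ℝ) (y : Ω → Fin n → ℝ)
    (β0 : Fin p → ℝ) (r : ℝ) (ω : Ω) : ℝ :=
  sSup ((fun β => |conLoss X φ (y ω) β - eLoss μ X φ y β -
      (conLoss X φ (y ω) β0 - eLoss μ X φ y β0)|) '' {β | l1 (β - β0) ≤ r})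

/-- The empirical process `U_J(r)` over the ball `B_{2,J}(r)`. -/
def Uproc {n p : ℕ} {Ω : Type*} [MeasurableSpace Ω] (μ : Measure Ω)
    (X : Matrix (Fin n) (Fin p) ℝ) (φ : ℝ → ℝ → ℝ) (y : Ω → Fin n → ℝ)
    (β0 : Fin p → ℝ) (J : Finset (Fin p)) (r : ℝ) (ω : Ω) : ℝ :=
  sSup ((fun β => |conLoss X φ (y ω) β - eLoss μ X φ y β -
      (conLoss X φ (y ω) β0 - eLoss μ X φ y β0)|) ''
      {β | (∀ j ∉ J, β j = 0) ∧ sq2 (X *ᵥ (β0 - β)) ≤ r ^ 2})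

/-- The compatibility factor `κ_a`. -/
def kappa {n p : ℕ} (X : Matrix (Fin n) (Fin p) ℝ) (β0 : Fin p → ℝ) (a : ℝ) : ℝ :=
  sInf {z | ∃ ν : Fin p → ℝ, ν ≠ 0 ∧
        l1on (suppF β0)ᶜ ν ≤ (1 + a) / (1 - a) * l1on (suppF β0) ν ∧
        z = sq2 (X *ᵥ ν) / (l1on (suppF β0) ν) ^ 2}

/-! Gaussian decoupling. If `g` is a standard Gaussian vector independent of `ε` and
`s = √a / σ`, then `E_g exp (s ⟨H ε, g⟩) = exp (s² ‖H ε‖² / 2)` and `‖H ε‖² = εᵀ H ε`. After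
exchanging the order of integration, the expectation over `ε` of `exp (s ⟨ε, H g⟩)` factors by
independence into one-dimensional moment generating functions, each controlled by subgaussianity;
what remains is `E_g exp ((a/2) gᵀ H g)`. By rotation invariance of `g` and the spectral theorem
this equals `∏ᵢ (1 - a λᵢ)^(-1/2)`, where the eigenvalues `λᵢ` of the projection `H` lie in
`{0, 1}` and sum to `trace H = m`. -/

lemma Matrix.IsSymm.mulVec_dotProduct {α ι : Type*} [CommSemiring α] [Fintype ι]
    {H : Matrix ι ι α} (hH : H.IsSymm) (w v : ι → α) :
    (H *ᵥ w) ⬝ᵥ v = w ⬝ᵥ (H *ᵥ v) := by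
  rw [← vecMul_transpose, hH.eq, dotProduct_mulVec]

lemma dotProduct_le_div_add_mul {ι : Type*} [Fintype ι] (x y : ι → ℝ) {t : ℝ} (ht : 0 < t) :
    x ⬝ᵥ y ≤ x ⬝ᵥ x / (4 * t) + t * (y ⬝ᵥ y) := by
  simp only [dotProduct, sum_div, mul_sum, ← sum_add_distrib]
  refine sum_le_sum fun i _ => ?_
  have hsq : 0 ≤ (x i - 2 * t * y i) ^ 2 / (4 * t) := by positivity
  have hexpand : (x i - 2 * t * y i) ^ 2 / (4 * t) =
      x i * x i / (4 * t) + t * (y i * y i) - x i * y i := by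
    field_simp
    ring
  linarith

section quadf

variable {n : ℕ} {H : Matrix (Fin n) (Fin n) ℝ}

lemma continuous_quadf (H : Matrix (Fin n) (Fin n) ℝ) : Continuous (quadf H) := by
  unfold quadf
  fun_prop

lemma quadf_smul (H : Matrix (Fin n) (Fin n) ℝ) (s : ℝ) (v : Fin n → ℝ) :
    quadf H (s • v) = s ^ 2 * quadf H v := by
  simp only [quadf, mulVec_smul, smul_dotProduct, dotProduct_smul, smul_eq_mul]
  ring

lemma quadf_eq_dotProduct_of_isIdempotentElem (hsymm : H.IsSymm) (hidem : IsIdempotentElem H)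
    (v : Fin n → ℝ) : quadf H v = (H *ᵥ v) ⬝ᵥ (H *ᵥ v) := by
  rw [quadf, hsymm.mulVec_dotProduct, mulVec_mulVec, hidem.eq]

lemma quadf_eigenvectorUnitary_mulVec (hH : H.IsHermitian) (y : Fin n → ℝ) :
    quadf H (hH.eigenvectorUnitary *ᵥ y) = ∑ i, hH.eigenvalues i * y i ^ 2 := by
  set U : Matrix (Fin n) (Fin n) ℝ := ↑hH.eigenvectorUnitary
  have hdiag : Uᵀ * H * U = diagonal hH.eigenvalues := by
    simpa [Unitary.conjStarAlgAut_star_apply, U, star_eq_conjTranspose] using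
      hH.conjStarAlgAut_star_eigenvectorUnitary
  rw [quadf, dotProduct_comm, dotProduct_mulVec, ← mulVec_transpose, mulVec_mulVec,
    mulVec_mulVec, hdiag, dotProduct]
  exact sum_congr rfl fun i _ => by rw [mulVec_diagonal]; ring

lemma Matrix.IsHermitian.eigenvalues_eq_zero_or_one (hH : H.IsHermitian)
    (hidem : IsIdempotentElem H) (i : Fin n) :
    hH.eigenvalues i = 0 ∨ hH.eigenvalues i = 1 :=
  hidem.spectrum_subset ℝ (hH.eigenvalues_mem_spectrum_real i)

end quadf

lemma gaussianPDFReal_mul_exp_mul_sq (c y : ℝ) :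
    gaussianPDFReal 0 1 y * exp (c * y ^ 2) = (√(2 * π))⁻¹ * exp (-(1 / 2 - c) * y ^ 2) := by
  rw [gaussianPDFReal_def, mul_assoc, ← exp_add]
  congr 2
  · simp
  · push_cast
    ring

lemma integrable_exp_mul_sq_gaussianReal {c : ℝ} (hc : c < 1 / 2) :
    Integrable (fun y => exp (c * y ^ 2)) (gaussianReal 0 1) := by
  rw [gaussianReal_of_var_ne_zero _ one_ne_zero,
    integrable_withDensity_iff_integrable_smul' (measurable_gaussianPDF 0 1)
      (ae_of_all _ fun _ => gaussianPDF_lt_top)]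
  simp_rw [toReal_gaussianPDF, smul_eq_mul, gaussianPDFReal_mul_exp_mul_sq]
  exact (integrable_exp_neg_mul_sq (by linarith)).const_mul _

lemma integral_exp_mul_sq_gaussianReal {c : ℝ} (hc : c < 1 / 2) :
    ∫ y, exp (c * y ^ 2) ∂gaussianReal 0 1 = (√(1 - 2 * c))⁻¹ := by
  rw [integral_gaussianReal_eq_integral_smul one_ne_zero]
  simp_rw [smul_eq_mul, gaussianPDFReal_mul_exp_mul_sq, integral_const_mul, integral_gaussian]
  have hratio : π / (1 / 2 - c) = 2 * π / (1 - 2 * c) := by field_simp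
  rw [hratio, sqrt_div' _ (by linarith : (0 : ℝ) ≤ 1 - 2 * c)]
  have : √(2 * π) ≠ 0 := by positivity
  field_simp

section pi

variable {ι : Type*} [Fintype ι]

lemma lintegral_ofReal_exp_sum_pi {E : ι → Type*} [∀ i, MeasurableSpace (E i)]
    {μ : ∀ i, Measure (E i)} [∀ i, SigmaFinite (μ i)] (f : ∀ i, E i → ℝ)
    (hf : ∀ i, Integrable (fun y => exp (f i y)) (μ i)) :
    ∫⁻ x, ENNReal.ofReal (exp (∑ i, f i (x i))) ∂Measure.pi μ =
      ENNReal.ofReal (∏ i, ∫ y, exp (f i y) ∂μ i) := by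
  simp_rw [exp_sum]
  rw [← ofReal_integral_eq_lintegral_ofReal (Integrable.fintype_prod_dep hf)
      (ae_of_all _ fun x => prod_nonneg fun i _ => (exp_pos _).le),
    integral_fintype_prod_eq_prod (fun i y => exp (f i y))]

lemma lintegral_exp_dotProduct_pi_gaussianReal (v : ι → ℝ) :
    ∫⁻ x, ENNReal.ofReal (exp (v ⬝ᵥ x)) ∂(Measure.pi fun _ : ι => gaussianReal 0 1) =
      ENNReal.ofReal (exp (v ⬝ᵥ v / 2)) := by
  simp_rw [dotProduct]
  rw [lintegral_ofReal_exp_sum_pi (fun i y => v i * y)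
    (fun i => integrable_exp_mul_gaussianReal _)]
  have hmgf (i : ι) : ∫ y, exp (v i * y) ∂gaussianReal 0 1 = exp (v i ^ 2 / 2) := by
    simpa [mgf] using congrFun (mgf_id_gaussianReal (μ := 0) (v := 1)) (v i)
  simp_rw [hmgf, ← exp_sum, sum_div, sq]

lemma lintegral_exp_sum_mul_sq_pi_gaussianReal (c : ι → ℝ) (hc : ∀ i, c i < 1 / 2) :
    ∫⁻ y, ENNReal.ofReal (exp (∑ i, c i * y i ^ 2))
        ∂(Measure.pi fun _ : ι => gaussianReal 0 1) =
      ENNReal.ofReal (∏ i, (√(1 - 2 * c i))⁻¹) := by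
  rw [lintegral_ofReal_exp_sum_pi (fun i y => c i * y ^ 2)
    (fun i => integrable_exp_mul_sq_gaussianReal (hc i))]
  simp_rw [integral_exp_mul_sq_gaussianReal (hc _)]

end pi

section gaussianQuadf

variable {n : ℕ} {H : Matrix (Fin n) (Fin n) ℝ}

lemma map_quadf_pi_gaussianReal (hH : H.IsHermitian) :
    (Measure.pi fun _ : Fin n => gaussianReal 0 1).map (quadf H) =
      (Measure.pi fun _ : Fin n => gaussianReal 0 1).map
        (fun y => ∑ i, hH.eigenvalues i * y i ^ 2) := by
  have hbasis := stdGaussian_eq_map_pi_orthonormalBasis hH.eigenvectorBasis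
  rw [← map_pi_eq_stdGaussian] at hbasis
  have hU (y : Fin n → ℝ) :
      (∑ i, y i • hH.eigenvectorBasis i).ofLp = (hH.eigenvectorUnitary : Matrix _ _ ℝ) *ᵥ y := by
    ext j
    simp [mulVec, dotProduct, mul_comm]
  have hq : Measurable fun z : EuclideanSpace ℝ (Fin n) => quadf H z.ofLp :=
    ((continuous_quadf H).comp (PiLp.continuous_ofLp 2 _)).measurable
  calc _ = ((Measure.pi fun _ : Fin n => gaussianReal 0 1).map (WithLp.toLp 2)).map
        (fun z => quadf H z.ofLp) := by
        rw [Measure.map_map hq (by fun_prop)]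
        rfl
    _ = _ := by
        rw [hbasis, Measure.map_map hq (by fun_prop)]
        simp_rw [Function.comp_def, hU, quadf_eigenvectorUnitary_mulVec]

lemma lintegral_exp_mul_quadf_pi_gaussianReal (hH : H.IsHermitian) {b : ℝ}
    (hb : ∀ i, b * hH.eigenvalues i < 1 / 2) :
    ∫⁻ x, ENNReal.ofReal (exp (b * quadf H x)) ∂(Measure.pi fun _ : Fin n => gaussianReal 0 1) =
      ENNReal.ofReal (∏ i, (√(1 - 2 * (b * hH.eigenvalues i)))⁻¹) := by
  have hg : Measurable fun r : ℝ => ENNReal.ofReal (exp (b * r)) := by fun_prop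
  rw [← lintegral_map hg (continuous_quadf H).measurable, map_quadf_pi_gaussianReal hH,
    lintegral_map hg (by fun_prop)]
  conv_lhs => simp only [mul_sum, ← mul_assoc]
  exact lintegral_exp_sum_mul_sq_pi_gaussianReal _ hb

lemma lintegral_exp_mul_quadf_pi_gaussianReal_of_isIdempotentElem (hH : H.IsHermitian)
    (hidem : IsIdempotentElem H) {a : ℝ} (ha : a < 1) :
    ∫⁻ x, ENNReal.ofReal (exp (a / 2 * quadf H x))
        ∂(Measure.pi fun _ : Fin n => gaussianReal 0 1) =
      ENNReal.ofReal (exp (-(H.trace / 2) * log (1 - a))) := by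
  have h01 := hH.eigenvalues_eq_zero_or_one hidem
  have hfactor (i : Fin n) : (√(1 - 2 * (a / 2 * hH.eigenvalues i)))⁻¹ =
      exp (-(hH.eigenvalues i / 2) * log (1 - a)) := by
    rcases h01 i with h | h
    · simp [h]
    · rw [h, sqrt_eq_rpow, ← rpow_neg (by linarith), rpow_def_of_pos (by linarith)]
      ring_nf
  rw [lintegral_exp_mul_quadf_pi_gaussianReal hH fun i => by
    rcases h01 i with h | h <;> rw [h] <;> linarith]
  simp_rw [hfactor, ← exp_sum, hH.trace_eq_sum_eigenvalues, ← sum_mul, sum_div,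
    RCLike.ofReal_real_eq_id, id, sum_neg_distrib]

end gaussianQuadf

section subgaussian

variable {Ω : Type*} [MeasurableSpace Ω] {μ : Measure Ω}

lemma integral_exp_dotProduct_le_of_iIndepFun {ι : Type*} [Fintype ι] {ε : ι → Ω → ℝ}
    (hmeas : ∀ i, Measurable (ε i)) (hindep : iIndepFun ε μ) {σ : ℝ}
    (hsub : ∀ i u, ∫ ω, exp (u * ε i ω) ∂μ ≤ exp (σ ^ 2 * u ^ 2 / 2)) (c : ι → ℝ) :
    ∫ ω, exp (c ⬝ᵥ fun i => ε i ω) ∂μ ≤ exp (σ ^ 2 * (c ⬝ᵥ c) / 2) := by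
  have hmgf := (hindep.comp (fun i u => c i * u) fun i => measurable_const_mul (c i)).mgf_sum
    (fun i => (hmeas i).const_mul (c i)) univ (t := 1)
  simp only [mgf, Function.comp_def, Finset.sum_apply, one_mul] at hmgf
  simp only [dotProduct]
  rw [hmgf, mul_sum, sum_div, exp_sum]
  exact prod_le_prod (fun i _ => integral_nonneg fun _ => (exp_pos _).le)
    fun i _ => (hsub i (c i)).trans_eq (by ring_nf)

variable {n : ℕ} {H : Matrix (Fin n) (Fin n) ℝ}

/- A subgaussian bound stated with Bochner integrals says nothing about a non-integrable
`exp (u * ε i)` (its integral is `0`); this integrability is what lets it bound the lower Lebesgue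
integrals in the decoupling argument. -/
lemma integrable_exp_mulVec_dotProduct (hsymm : H.IsSymm) (hidem : IsIdempotentElem H)
    {X : Ω → Fin n → ℝ} (hX : Measurable X) {t : ℝ} (ht : 0 < t)
    (hint : Integrable (fun ω => exp (t * quadf H (X ω))) μ) (w : Fin n → ℝ) :
    Integrable (fun ω => exp ((H *ᵥ w) ⬝ᵥ X ω)) μ := by
  refine (hint.const_mul (exp (w ⬝ᵥ w / (4 * t)))).mono' (by fun_prop) (ae_of_all _ fun ω => ?_)
  rw [norm_of_nonneg (exp_pos _).le, ← exp_add, exp_le_exp, hsymm.mulVec_dotProduct,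
    quadf_eq_dotProduct_of_isIdempotentElem hsymm hidem]
  exact dotProduct_le_div_add_mul _ _ ht

lemma lintegral_exp_mulVec_dotProduct_le {ε : Fin n → Ω → ℝ} (hmeas : ∀ i, Measurable (ε i))
    (hindep : iIndepFun ε μ) {σ : ℝ}
    (hsub : ∀ i u, ∫ ω, exp (u * ε i ω) ∂μ ≤ exp (σ ^ 2 * u ^ 2 / 2))
    (hsymm : H.IsSymm) (hidem : IsIdempotentElem H) {t : ℝ} (ht : 0 < t)
    (hint : Integrable (fun ω => exp (t * quadf H fun i => ε i ω)) μ) (w : Fin n → ℝ) :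
    ∫⁻ ω, ENNReal.ofReal (exp ((H *ᵥ w) ⬝ᵥ fun i => ε i ω)) ∂μ ≤
      ENNReal.ofReal (exp (σ ^ 2 / 2 * quadf H w)) := by
  rw [← ofReal_integral_eq_lintegral_ofReal
    (integrable_exp_mulVec_dotProduct hsymm hidem (measurable_pi_lambda _ hmeas) ht hint w)
    (ae_of_all _ fun _ => (exp_pos _).le)]
  refine ENNReal.ofReal_le_ofReal
    ((integral_exp_dotProduct_le_of_iIndepFun hmeas hindep hsub _).trans_eq ?_)
  rw [quadf_eq_dotProduct_of_isIdempotentElem hsymm hidem]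
  ring_nf

lemma lintegral_exp_quadf_eq_lintegral_pi_gaussianReal [SFinite μ] (hsymm : H.IsSymm)
    (hidem : IsIdempotentElem H) {X : Ω → Fin n → ℝ} (hX : Measurable X) (s : ℝ) :
    ∫⁻ ω, ENNReal.ofReal (exp (s ^ 2 / 2 * quadf H (X ω))) ∂μ =
      ∫⁻ x, ∫⁻ ω, ENNReal.ofReal (exp ((H *ᵥ (s • x)) ⬝ᵥ X ω)) ∂μ
        ∂(Measure.pi fun _ : Fin n => gaussianReal 0 1) := by
  have hswap (ω : Ω) (x : Fin n → ℝ) : (s • H *ᵥ X ω) ⬝ᵥ x = (H *ᵥ (s • x)) ⬝ᵥ X ω := by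
    rw [mulVec_smul, smul_dotProduct, smul_dotProduct, hsymm.mulVec_dotProduct, dotProduct_comm]
  calc _ = ∫⁻ ω, ∫⁻ x, ENNReal.ofReal (exp ((s • H *ᵥ X ω) ⬝ᵥ x))
          ∂(Measure.pi fun _ : Fin n => gaussianReal 0 1) ∂μ := by
        refine lintegral_congr fun ω => ?_
        rw [lintegral_exp_dotProduct_pi_gaussianReal, smul_dotProduct, dotProduct_smul,
          ← quadf_eq_dotProduct_of_isIdempotentElem hsymm hidem, smul_eq_mul, smul_eq_mul]
        ring_nf
    _ = _ := by
        rw [lintegral_lintegral_swap (by fun_prop)]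
        simp_rw [hswap]

end subgaussian

theorem subgaussian_quadratic_mgf_general {n : ℕ} {Ω : Type*} [MeasurableSpace Ω]
    (μ : Measure Ω) [IsProbabilityMeasure μ]
    (ε : Fin n → Ω → ℝ) (hmeas : ∀ i, Measurable (ε i))
    (hindep : iIndepFun ε μ)
    (σ : ℝ) (hσ : 0 < σ)
    (hsub : ∀ i u, ∫ ω, exp (u * ε i ω) ∂μ ≤ exp (σ ^ 2 * u ^ 2 / 2))
    (H : Matrix (Fin n) (Fin n) ℝ) (hsymm : Hᵀ = H) (hidem : H * H = H)
    (m : ℕ) (htr : H.trace = m)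
    (a : ℝ) (ha : a ∈ Set.Ioo (0 : ℝ) 1) :
    ∫ ω, exp (a / (2 * σ ^ 2) * quadf H fun i => ε i ω) ∂μ ≤
      exp (-((m : ℝ) / 2) * Real.log (1 - a)) := by
  obtain ⟨ha0, ha1⟩ := ha
  by_cases hint : Integrable (fun ω => exp (a / (2 * σ ^ 2) * quadf H fun i => ε i ω)) μ
  swap
  · rw [integral_undef hint]
    positivity
  set s := √a / σ
  have hs : s ^ 2 / 2 = a / (2 * σ ^ 2) := by
    rw [div_pow, sq_sqrt ha0.le]
    ring
  have hσs : σ ^ 2 / 2 * s ^ 2 = a / 2 := by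
    rw [div_pow, sq_sqrt ha0.le]
    field_simp
  rw [integral_eq_lintegral_of_nonneg_ae (ae_of_all _ fun _ => (exp_pos _).le)
    hint.aestronglyMeasurable, ← htr]
  refine ENNReal.toReal_le_of_le_ofReal (exp_pos _).le ?_
  calc ∫⁻ ω, ENNReal.ofReal (exp (a / (2 * σ ^ 2) * quadf H fun i => ε i ω)) ∂μ
      = ∫⁻ x, ∫⁻ ω, ENNReal.ofReal (exp ((H *ᵥ (s • x)) ⬝ᵥ fun i => ε i ω)) ∂μ
          ∂(Measure.pi fun _ : Fin n => gaussianReal 0 1) := by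
        rw [← hs]
        exact lintegral_exp_quadf_eq_lintegral_pi_gaussianReal hsymm hidem
          (measurable_pi_lambda _ hmeas) s
    _ ≤ ∫⁻ x, ENNReal.ofReal (exp (σ ^ 2 / 2 * quadf H (s • x)))
          ∂(Measure.pi fun _ : Fin n => gaussianReal 0 1) :=
        lintegral_mono fun x => lintegral_exp_mulVec_dotProduct_le hmeas hindep hsub hsymm hidem
          (by positivity) hint (s • x)
    _ = ∫⁻ x, ENNReal.ofReal (exp (a / 2 * quadf H x))
          ∂(Measure.pi fun _ : Fin n => gaussianReal 0 1) := by
        simp_rw [quadf_smul, ← mul_assoc, hσs]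
    _ = _ := lintegral_exp_mul_quadf_pi_gaussianReal_of_isIdempotentElem
        (isHermitian_iff_isSymm.mpr hsymm) hidem ha1

/-- Lemma 2 (ii): moment generating function bound for a subgaussian
quadratic form. -/
theorem subgaussian_quadratic_mgf {n : ℕ} {Ω : Type*} [MeasurableSpace Ω]
    (μ : Measure Ω) [IsProbabilityMeasure μ]
    (ε : Fin n → Ω → ℝ) (hmeas : ∀ i, Measurable (ε i))
    (hindep : iIndepFun ε μ)
    (hmean : ∀ i, ∫ ω, ε i ω ∂μ = 0)
    (σ : ℝ) (hσ : 0 < σ)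
    (hsub : ∀ i u, ∫ ω, exp (u * ε i ω) ∂μ ≤ exp (σ ^ 2 * u ^ 2 / 2))
    (H : Matrix (Fin n) (Fin n) ℝ) (hsymm : Hᵀ = H) (hidem : H * H = H)
    (m : ℕ) (htr : H.trace = m)
    (a : ℝ) (ha : a ∈ Set.Ioo (0 : ℝ) 1) :
    ∫ ω, exp (a / (2 * σ ^ 2) * quadf H fun i => ε i ω) ∂μ ≤
      exp (-((m : ℝ) / 2) * Real.log (1 - a)) :=
  subgaussian_quadratic_mgf_general μ ε hmeas hindep σ hσ hsub H hsymm hidem m htr a ha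

end
end

section
/- Suppose the loss ℓ is convex on ℝ^p (equivalently the total cumulant g is convex) and a ∈ (0,1). Then on the event {|Xᵀε|_∞ ≤ aλ}, the difference Δ = β̂ − β° between the Lasso estimator and the true parameter belongs to the signed pseudo-cone C_a; in particular (1−a)|Δ_{T̄}|₁ ≤ (1+a)|Δ_T|₁. -/
open MeasureTheory Real Matrix Finset Filter ProbabilityTheory

noncomputable section

/-!
Write `Δ = β̂ − β°` and `z = Xᵀ(y − γ⃗'(Xβ°))`, so that `|z_j| ≤ aλ`. Convexity of the loss along
the segment from `β°` to `β̂` gives `ℓ(β̂) − ℓ(β°) ≥ −zᵀΔ ≥ −aλ|Δ|₁`, while optimality of `β̂`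
against `β°` gives `λ(|β̂|₁ − |β°|₁) ≤ ℓ(β°) − ℓ(β̂)`; since `|β̂|₁ − |β°|₁ ≥ |Δ_T̄|₁ − |Δ_T|₁`,
this is the `ℓ1` cone inequality. For the sign condition at `j ∉ T` we have `Δ_j = β̂_j`;
shrinking `β̂_j` towards `0` cannot decrease the Lasso objective, and the one-sided derivative
yields `λ|β̂_j| ≤ β̂_j (Xᵀ(y − γ⃗'(Xβ̂)))_j`. Subtracting the noise term `β̂_j z_j ≤ aλ|β̂_j|`
leaves `β̂_j (Xᵀ(γ⃗'(Xβ̂) − γ⃗'(Xβ°)))_j ≤ (a − 1)λ|β̂_j| ≤ 0`.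
-/

lemma notMem_suppF {p : ℕ} {v : Fin p → ℝ} {j : Fin p} : j ∉ suppF v ↔ v j = 0 := by
  simp [suppF]

section Norms

variable {ι : Type*} [Fintype ι]

lemma abs_le_linf (v : ι → ℝ) (j : ι) : |v j| ≤ linf v :=
  le_ciSup (f := fun k => |v k|) (Set.finite_range _).bddAbove j

lemma dotProduct_le_mul_l1 {z : ι → ℝ} {c : ℝ} (hz : ∀ j, |z j| ≤ c) (v : ι → ℝ) :
    v ⬝ᵥ z ≤ c * l1 v := by
  rw [l1, Finset.mul_sum]
  refine Finset.sum_le_sum fun j _ => ?_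
  calc v j * z j ≤ |v j| * |z j| := (le_abs_self _).trans (abs_mul _ _).le
    _ ≤ c * |v j| := by rw [mul_comm c]; exact mul_le_mul_of_nonneg_left (hz j) (abs_nonneg _)

lemma l1_eq_l1on_add_l1on_compl [DecidableEq ι] (J : Finset ι) (v : ι → ℝ) :
    l1 v = l1on J v + l1on Jᶜ v :=
  (Finset.sum_add_sum_compl J _).symm

lemma l1on_compl_sub_l1on_le_l1_sub [DecidableEq ι] {J : Finset ι} {β0 : ι → ℝ}
    (hβ0 : ∀ j ∉ J, β0 j = 0) (b : ι → ℝ) :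
    l1on Jᶜ (b - β0) - l1on J (b - β0) ≤ l1 b - l1 β0 := by
  have hcompl : l1on Jᶜ (b - β0) = l1on Jᶜ b := Finset.sum_congr rfl fun j hj => by
    rw [Pi.sub_apply, hβ0 j (Finset.mem_compl.1 hj), sub_zero]
  have hcompl0 : l1on Jᶜ β0 = 0 := Finset.sum_eq_zero fun j hj => by
    rw [hβ0 j (Finset.mem_compl.1 hj), abs_zero]
  have htri : l1on J β0 - l1on J b ≤ l1on J (b - β0) := by
    rw [l1on, l1on, l1on, ← Finset.sum_sub_distrib]
    exact Finset.sum_le_sum fun j _ => by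
      rw [Pi.sub_apply, abs_sub_comm]; exact abs_sub_abs_le_abs_sub _ _
  rw [l1_eq_l1on_add_l1on_compl J b, l1_eq_l1on_add_l1on_compl J β0, hcompl, hcompl0]
  linarith

lemma l1_add_smul_single_neg [DecidableEq ι] (b : ι → ℝ) (j : ι) {s : ℝ} (hs : s ≤ 1) :
    l1 (b + s • Pi.single j (-b j)) = l1 b - s * |b j| := by
  have hcoord : ∀ k, |(b + s • Pi.single j (-b j) : ι → ℝ) k|
      = |b k| - s * |(Pi.single j (b j) : ι → ℝ) k| := by
    intro k
    rcases eq_or_ne k j with rfl | hk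
    · rw [Pi.add_apply, Pi.smul_apply, Pi.single_eq_same, Pi.single_eq_same, smul_eq_mul,
        show b k + s * -b k = (1 - s) * b k by ring, abs_mul, abs_of_nonneg (by linarith)]
      ring
    · simp [Pi.single_eq_of_ne hk]
  have hsingle : ∑ k, |(Pi.single j (b j) : ι → ℝ) k| = |b j| := by
    rw [Fintype.sum_eq_single j fun k hk => by simp [Pi.single_eq_of_ne hk], Pi.single_eq_same]
  simp only [l1, hcoord, Finset.sum_sub_distrib, ← Finset.mul_sum, hsingle]

end Norms

section Derivatives

open Topology

variable {E : Type*} [AddCommGroup E] [Module ℝ E]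

lemma nonneg_of_hasDerivAt_of_forall_Ioo_le {φ : ℝ → ℝ} {d : ℝ} (hφ : HasDerivAt φ d 0)
    (hmin : ∀ s ∈ Set.Ioo (0 : ℝ) 1, φ 0 ≤ φ s) : 0 ≤ d := by
  have hslope : Tendsto (slope φ 0) (𝓝[>] 0) (𝓝 d) :=
    (hasDerivWithinAt_iff_tendsto_slope' Set.self_notMem_Ioi).1 hφ.hasDerivWithinAt
  refine ge_of_tendsto hslope ?_
  filter_upwards [Ioo_mem_nhdsGT (zero_lt_one' ℝ)] with s hs
  rw [slope_def_field, sub_zero]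
  exact div_nonneg (sub_nonneg.2 (hmin s hs)) hs.1.le

lemma ConvexOn.hasDerivAt_line_le_sub {f : E → ℝ} (hf : ConvexOn ℝ Set.univ f) {x y : E} {d : ℝ}
    (hd : HasDerivAt (fun s : ℝ => f (x + s • (y - x))) d 0) : d ≤ f y - f x := by
  have hline : ConvexOn ℝ Set.univ fun s : ℝ => f (x + s • (y - x)) := by
    have : (fun s : ℝ => f (x + s • (y - x))) = f ∘ AffineMap.lineMap x y := by
      funext s; rw [Function.comp_apply, AffineMap.lineMap_apply_module', add_comm]
    rw [this]
    exact hf.comp_affineMap _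
  simpa [slope_def_field] using
    hline.le_slope_of_hasDerivAt (Set.mem_univ 0) (Set.mem_univ 1) zero_lt_one hd

end Derivatives

section Lasso

variable {ι : Type*} [Fintype ι] [DecidableEq ι]

lemma lasso_le_deriv_toward_zero {f : (ι → ℝ) → ℝ} {lam : ℝ} {b : ι → ℝ}
    (hb : ∀ β, f b + lam * l1 b ≤ f β + lam * l1 β) (j : ι) {d : ℝ}
    (hd : HasDerivAt (fun s : ℝ => f (b + s • Pi.single j (-b j))) d 0) : lam * |b j| ≤ d := by
  refine sub_nonneg.1 (nonneg_of_hasDerivAt_of_forall_Ioo_le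
    (hd.fun_sub (hasDerivAt_mul_const (lam * |b j|))) fun s hs => ?_)
  have := hb (b + s • Pi.single j (-b j))
  rw [l1_add_smul_single_neg b j hs.2.le] at this
  simp only [zero_smul, add_zero, zero_mul, sub_zero]
  linarith

lemma lasso_l1on_compl_le {f : (ι → ℝ) → ℝ} {lam a : ℝ} (hlam : 0 < lam) {b β0 : ι → ℝ}
    (hb : ∀ β, f b + lam * l1 b ≤ f β + lam * l1 β)
    (hf : -(a * lam * l1 (b - β0)) ≤ f b - f β0) {J : Finset ι} (hβ0 : ∀ j ∉ J, β0 j = 0) :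
    (1 - a) * l1on Jᶜ (b - β0) ≤ (1 + a) * l1on J (b - β0) := by
  have hl1 : lam * (l1on Jᶜ (b - β0) - l1on J (b - β0)) ≤ a * lam * l1 (b - β0) :=
    (mul_le_mul_of_nonneg_left (l1on_compl_sub_l1on_le_l1_sub hβ0 b) hlam.le).trans
      (by linarith [hb β0])
  rw [l1_eq_l1on_add_l1on_compl J (b - β0)] at hl1
  exact le_of_mul_le_mul_left (by linarith) hlam

end Lasso

section GLM

variable {n p : ℕ} (X : Matrix (Fin n) (Fin p) ℝ) {γ : ℝ → ℝ} (yv : Fin n → ℝ)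

lemma glmLoss_hasDerivAt_line (hγ : Differentiable ℝ γ) (β v : Fin p → ℝ) :
    HasDerivAt (fun s : ℝ => glmLoss X γ yv (β + s • v))
      (-(v ⬝ᵥ (Xᵀ *ᵥ (yv - gdot X γ β)))) 0 := by
  have hscore : -(v ⬝ᵥ (Xᵀ *ᵥ (yv - gdot X γ β)))
      = ∑ i, (deriv γ ((X *ᵥ β) i) * (X *ᵥ v) i - yv i * (X *ᵥ v) i) := by
    rw [dotProduct_mulVec, vecMul_transpose, ← dotProduct_neg, neg_sub, dotProduct]
    exact Finset.sum_congr rfl fun i _ => by simp only [gdot, Pi.sub_apply]; ring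
  rw [hscore]
  simp only [glmLoss, mulVec_add, mulVec_smul, Pi.add_apply, Pi.smul_apply, smul_eq_mul]
  refine HasDerivAt.fun_sum fun i _ => ?_
  have hlin : HasDerivAt (fun s : ℝ => (X *ᵥ β) i + s * (X *ᵥ v) i) ((X *ᵥ v) i) 0 := by
    simpa using ((hasDerivAt_id (0 : ℝ)).mul_const ((X *ᵥ v) i)).const_add ((X *ᵥ β) i)
  have hγline : HasDerivAt (fun s : ℝ => γ ((X *ᵥ β) i + s * (X *ᵥ v) i))
      (deriv γ ((X *ᵥ β) i) * (X *ᵥ v) i) 0 := by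
    simpa [Function.comp_def] using
      (hγ ((X *ᵥ β) i + 0 * (X *ᵥ v) i)).hasDerivAt.comp (0 : ℝ) hlin
  exact hγline.fun_sub (hlin.const_mul (yv i))

lemma glmLasso_mul_gradDiff_nonpos (hγ : Differentiable ℝ γ) {lam a : ℝ} (hlam : 0 ≤ lam)
    (ha : a ≤ 1) {b : Fin p → ℝ}
    (hb : ∀ β, glmLoss X γ yv b + lam * l1 b ≤ glmLoss X γ yv β + lam * l1 β)
    {β0 : Fin p → ℝ} {j : Fin p} (hz : |(Xᵀ *ᵥ (yv - gdot X γ β0)) j| ≤ a * lam) :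
    b j * (Xᵀ *ᵥ (gdot X γ b - gdot X γ β0)) j ≤ 0 := by
  have hkkt : lam * |b j| ≤ b j * (Xᵀ *ᵥ (yv - gdot X γ b)) j := by
    simpa [single_dotProduct] using
      lasso_le_deriv_toward_zero hb j (glmLoss_hasDerivAt_line X yv hγ b _)
  have hnoise : b j * (Xᵀ *ᵥ (yv - gdot X γ β0)) j ≤ |b j| * (a * lam) :=
    (le_abs_self _).trans ((abs_mul _ _).trans_le
      (mul_le_mul_of_nonneg_left hz (abs_nonneg _)))
  have hdiff : (Xᵀ *ᵥ (gdot X γ b - gdot X γ β0)) j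
      = (Xᵀ *ᵥ (yv - gdot X γ β0)) j - (Xᵀ *ᵥ (yv - gdot X γ b)) j := by
    simp only [mulVec_sub, Pi.sub_apply]; ring
  rw [hdiff, mul_sub]
  nlinarith [mul_nonneg (mul_nonneg (abs_nonneg (b j)) hlam) (sub_nonneg.2 ha)]

end GLM

theorem lasso_error_in_cone_general {n p : ℕ} (X : Matrix (Fin n) (Fin p) ℝ)
    (γ : ℝ → ℝ) (hγ : Differentiable ℝ γ) (β0 : Fin p → ℝ)
    (yv : Fin n → ℝ) (lam : ℝ) (hlam : 0 < lam)
    (hconv : ConvexOn ℝ Set.univ (glmLoss X γ yv))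
    (a : ℝ) (ha : a ∈ Set.Ioo (0 : ℝ) 1)
    (bhat : Fin p → ℝ)
    (hbhat : ∀ β, glmLoss X γ yv bhat + lam * l1 bhat ≤ glmLoss X γ yv β + lam * l1 β)
    (hev : linf (Xᵀ *ᵥ (yv - gdot X γ β0)) ≤ a * lam) :
    bhat - β0 ∈ cone X γ β0 a ∧
      (1 - a) * l1on (suppF β0)ᶜ (bhat - β0) ≤ (1 + a) * l1on (suppF β0) (bhat - β0) := by
  obtain ⟨-, ha1⟩ := ha
  have hβ0 : ∀ j ∉ suppF β0, β0 j = 0 := fun j => notMem_suppF.1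
  have hz : ∀ j, |(Xᵀ *ᵥ (yv - gdot X γ β0)) j| ≤ a * lam :=
    fun j => (abs_le_linf _ j).trans hev
  have hconvex : -(a * lam * l1 (bhat - β0)) ≤ glmLoss X γ yv bhat - glmLoss X γ yv β0 :=
    (neg_le_neg (dotProduct_le_mul_l1 hz _)).trans
      (hconv.hasDerivAt_line_le_sub (glmLoss_hasDerivAt_line X yv hγ β0 _))
  have hl1 := lasso_l1on_compl_le hlam hbhat hconvex hβ0
  refine ⟨⟨?_, fun j hj => ?_⟩, hl1⟩
  · rw [div_mul_eq_mul_div, le_div_iff₀ (sub_pos.2 ha1)]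
    linarith
  · rw [add_sub_cancel, Pi.sub_apply, hβ0 j hj, sub_zero]
    exact glmLasso_mul_gradDiff_nonpos X yv hγ hlam.le ha1.le hbhat (hz j)

/-- on `{|Xᵀε|_∞ ≤ aλ}`, the Lasso error `Δ = β̂ − β°` belongs to the
signed pseudo-cone `C_a`; in particular `(1−a)|Δ_{T̄}|₁ ≤ (1+a)|Δ_T|₁`. -/
theorem lasso_error_in_cone {n p : ℕ} (X : Matrix (Fin n) (Fin p) ℝ)
    (hX : ∀ j, ∑ i, (X i j) ^ 2 = 1)
    (γ : ℝ → ℝ) (hγ : Differentiable ℝ γ) (β0 : Fin p → ℝ)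
    (yv : Fin n → ℝ) (lam : ℝ) (hlam : 0 < lam)
    (hconv : ConvexOn ℝ Set.univ (glmLoss X γ yv))
    (a : ℝ) (ha : a ∈ Set.Ioo (0 : ℝ) 1)
    (bhat : Fin p → ℝ)
    (hbhat : ∀ β, glmLoss X γ yv bhat + lam * l1 bhat ≤ glmLoss X γ yv β + lam * l1 β)
    (hev : linf (Xᵀ *ᵥ (yv - gdot X γ β0)) ≤ a * lam) :
    bhat - β0 ∈ cone X γ β0 a ∧
      (1 - a) * l1on (suppF β0)ᶜ (bhat - β0) ≤ (1 + a) * l1on (suppF β0) (bhat - β0) :=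
  lasso_error_in_cone_general X γ hγ β0 yv lam hlam hconv a ha bhat hbhat hev

end
end
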